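/- arXiv:2207.12778 — 2 statements merged into one kernel-verified Lean document; each statement's English description precedes it below -/
import Mathlib

section
/- If a semigroup X is absolutely TzS-closed, then every prime coideal of X is an absolutely TzS-closed semigroup; if X is projectively TzS-closed, then every prime coideal of X is projectively TzS-closed. -/
universe u

open Set TopologicalSpace

/-- A topological space is zero-dimensional: it has a base of clopen sets. -/
def HasClopenBasis (Y : Type*) [TopologicalSpace Y] : Prop :=
  ∃ B : Set (Set Y), (∀ s ∈ B, IsClopen s) ∧ IsTopologicalBasis B

section TopClasses

variable (X : Type u) [Semigroup X]

/-- `X` is absolutely `T₁S`-closed: the image of every homomorphism to a `T₁`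
topological semigroup is closed. -/
def AbsolutelyT1SClosed : Prop :=
  ∀ (Y : Type u) [Semigroup Y] [TopologicalSpace Y] [ContinuousMul Y] [T1Space Y]
    (h : X →ₙ* Y), IsClosed (Set.range h)

/-- `X` is absolutely `T₂S`-closed. -/
def AbsolutelyT2SClosed : Prop :=
  ∀ (Y : Type u) [Semigroup Y] [TopologicalSpace Y] [ContinuousMul Y] [T2Space Y]
    (h : X →ₙ* Y), IsClosed (Set.range h)

/-- `X` is absolutely `TzS`-closed. -/
def AbsolutelyTzSClosed : Prop :=
  ∀ (Y : Type u) [Semigroup Y] [TopologicalSpace Y] [ContinuousMul Y] [T1Space Y],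
    HasClopenBasis Y → ∀ (h : X →ₙ* Y), IsClosed (Set.range h)

/-- `X` is `T₁S`-closed: the image of every injective homomorphism to a `T₁`
topological semigroup with discrete image is closed. -/
def T1SClosed : Prop :=
  ∀ (Y : Type u) [Semigroup Y] [TopologicalSpace Y] [ContinuousMul Y] [T1Space Y]
    (h : X →ₙ* Y), Function.Injective h → DiscreteTopology (Set.range h) →
      IsClosed (Set.range h)

/-- `X` is `T₂S`-closed. -/
def T2SClosed : Prop :=
  ∀ (Y : Type u) [Semigroup Y] [TopologicalSpace Y] [ContinuousMul Y] [T2Space Y]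
    (h : X →ₙ* Y), Function.Injective h → DiscreteTopology (Set.range h) →
      IsClosed (Set.range h)

/-- `X` is `TzS`-closed. -/
def TzSClosed : Prop :=
  ∀ (Y : Type u) [Semigroup Y] [TopologicalSpace Y] [ContinuousMul Y] [T1Space Y],
    HasClopenBasis Y → ∀ (h : X →ₙ* Y), Function.Injective h →
      DiscreteTopology (Set.range h) → IsClosed (Set.range h)

/-- `X` is injectively `T₂S`-closed. -/
def InjectivelyT2SClosed : Prop :=
  ∀ (Y : Type u) [Semigroup Y] [TopologicalSpace Y] [ContinuousMul Y] [T2Space Y]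
    (h : X →ₙ* Y), Function.Injective h → IsClosed (Set.range h)

/-- `X` is projectively `T₁S`-closed: all congruence quotients are `T₁S`-closed. -/
def ProjectivelyT1SClosed : Prop := ∀ c : Con X, T1SClosed c.Quotient

/-- `X` is projectively `TzS`-closed. -/
def ProjectivelyTzSClosed : Prop := ∀ c : Con X, TzSClosed c.Quotient

/-- `X` is projectively `T₁S`-discrete: every homomorphism into a `T₁`
topological semigroup has discrete image. -/
def ProjectivelyT1SDiscrete : Prop :=
  ∀ (Y : Type u) [Semigroup Y] [TopologicalSpace Y] [ContinuousMul Y] [T1Space Y]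
    (h : X →ₙ* Y), DiscreteTopology (Set.range h)

/-- `X` is projectively `TzS`-discrete. -/
def ProjectivelyTzSDiscrete : Prop :=
  ∀ (Y : Type u) [Semigroup Y] [TopologicalSpace Y] [ContinuousMul Y] [T1Space Y],
    HasClopenBasis Y → ∀ (h : X →ₙ* Y), DiscreteTopology (Set.range h)

end TopClasses

/-- `spow x n` is the power `x^(n+1)` in a semigroup; thus as `n` ranges over `ℕ`,
`spow x n` ranges over all powers `x^m`, `m ≥ 1`. -/
def spow {X : Type*} [Semigroup X] (x : X) : ℕ → X
  | 0 => x
  | n + 1 => spow x n * x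

section AlgDefs

variable (X : Type*) [Semigroup X]

/-- the set `E(X)` of idempotents. -/
def idemSet : Set X := {x | x * x = x}

/-- `H_e`, the maximal subgroup containing the idempotent `e`. -/
def maxSubgroup (e : X) : Set X :=
  {x | x * e = x ∧ e * x = x ∧ ∃ y, y * e = y ∧ e * y = y ∧ x * y = e ∧ y * x = e}

/-- The Clifford part `H(X) = ⋃_{e ∈ E(X)} H_e`. -/
def cliffordPart : Set X := ⋃ e ∈ idemSet X, maxSubgroup X e

/-- `H_e/e := {x : xe = ex ∈ H_e}`. -/
def HeCoideal (e : X) : Set X := {x | x * e = e * x ∧ x * e ∈ maxSubgroup X e}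

/-- `I` is an ideal of the semigroup `X`. -/
def IsIdealSet (I : Set X) : Prop := ∀ x ∈ I, ∀ y : X, x * y ∈ I ∧ y * x ∈ I

/-- The set `VE(X)` of viable idempotents: `e` is idempotent and `X ∖ (H_e/e)` is an ideal. -/
def viableIdems : Set X := {e | e ∈ idemSet X ∧ IsIdealSet X (Set.univ \ HeCoideal X e)}

/-- The center `Z(X)`. -/
def centerSet : Set X := {z | ∀ x, z * x = x * z}

/-- `√A = {x : xⁿ ∈ A for some n ≥ 1}`. -/
def sqrtSet (A : Set X) : Set X := {x | ∃ n : ℕ, spow x n ∈ A}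

/-- A subset `B ⊆ X` is bounded: there is `n ≥ 1` with `xⁿ` idempotent for all `x ∈ B`. -/
def BoundedSet (B : Set X) : Prop := ∃ n : ℕ, ∀ x ∈ B, spow x n ∈ idemSet X

/-- The semigroup `X` is bounded. -/
def BoundedSemigroup : Prop := ∃ n : ℕ, ∀ x : X, spow x n ∈ idemSet X

/-- `X` is chain-finite. -/
def ChainFinite : Prop :=
  ∀ I : Set X, I.Infinite → ∃ x ∈ I, ∃ y ∈ I, x * y ≠ x ∧ x * y ≠ y

/-- `G ⊆ X` is a subgroup of the semigroup `X`. -/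
def IsSubgroupSet (G : Set X) : Prop :=
  (∀ x ∈ G, ∀ y ∈ G, x * y ∈ G) ∧
    ∃ e ∈ G, (∀ x ∈ G, x * e = x ∧ e * x = x) ∧ ∀ x ∈ G, ∃ y ∈ G, x * y = e ∧ y * x = e

/-- `X` is group-finite: all its subgroups are finite. -/
def GroupFinite : Prop := ∀ G : Set X, IsSubgroupSet X G → G.Finite

/-- `X` is Clifford+finite: `X ∖ H(X)` is finite. -/
def CliffordPlusFinite : Prop := (Set.univ \ cliffordPart X).Finite

/-- `X` is `E`-commutative: idempotents commute. -/
def ECommutative : Prop := ∀ x ∈ idemSet X, ∀ y ∈ idemSet X, x * y = y * x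

end AlgDefs

/-- The Rees congruence associated with an ideal `I` of `X`. -/
def ReesCon {X : Type*} [Semigroup X] (I : Set X) (hI : IsIdealSet X I) : Con X where
  r x y := x = y ∨ (x ∈ I ∧ y ∈ I)
  iseqv :=
    { refl := fun _ => Or.inl rfl
      symm := by rintro x y (rfl | ⟨h1, h2⟩); exacts [Or.inl rfl, Or.inr ⟨h2, h1⟩]
      trans := by
        rintro x y z (rfl | ⟨h1, h2⟩) (rfl | ⟨h3, h4⟩)
        exacts [Or.inl rfl, Or.inr ⟨h3, h4⟩, Or.inr ⟨h1, h2⟩, Or.inr ⟨h1, h4⟩] }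
  mul' := by
    rintro a b c d (rfl | ⟨h1, h2⟩) (rfl | ⟨h3, h4⟩)
    · exact Or.inl rfl
    · exact Or.inr ⟨(hI c h3 a).2, (hI d h4 a).2⟩
    · exact Or.inr ⟨(hI a h1 c).1, (hI b h2 c).1⟩
    · exact Or.inr ⟨(hI a h1 c).1, (hI b h2 d).1⟩

/-- `X` is ideally `T₂S`-closed: all its Rees quotients are `T₂S`-closed. -/
def IdeallyT2SClosed (X : Type u) [Semigroup X] : Prop :=
  ∀ (I : Set X) (hI : IsIdealSet X I), T2SClosed (ReesCon I hI).Quotient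

/-- `X` is ideally `TzS`-closed. -/
def IdeallyTzSClosed (X : Type u) [Semigroup X] : Prop :=
  ∀ (I : Set X) (hI : IsIdealSet X I), TzSClosed (ReesCon I hI).Quotient

/-- A congruence is a semilattice congruence if its quotient is a commutative
semigroup of idempotents. -/
def IsSemilatticeCon {X : Type*} [Semigroup X] (c : Con X) : Prop :=
  (∀ a b : c.Quotient, a * b = b * a) ∧ ∀ a : c.Quotient, a * a = a

/-- The smallest semilattice congruence `⇕` on `X`, the intersection of all
semilattice congruences. -/
def slCon (X : Type*) [Semigroup X] : Con X := sInf {c | IsSemilatticeCon c}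

theorem centerSet_mul_mem {X : Type*} [Semigroup X] {a b : X}
    (ha : a ∈ centerSet X) (hb : b ∈ centerSet X) : a * b ∈ centerSet X := fun t => by
  rw [mul_assoc, hb t, ← mul_assoc, ha t, mul_assoc]

/-- The ideal center `IZ(X) = {z ∈ Z(X) : zX ⊆ Z(X)}`, as a subsemigroup of `X`. -/
def idealCenter (X : Type*) [Semigroup X] : Subsemigroup X where
  carrier := {z | z ∈ centerSet X ∧ ∀ x : X, z * x ∈ centerSet X}
  mul_mem' := by
    rintro a b ⟨ha, ha'⟩ ⟨hb, hb'⟩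
    refine ⟨centerSet_mul_mem ha hb, fun x => ?_⟩
    have h : a * b * x = a * (b * x) := mul_assoc a b x
    rw [h]
    exact centerSet_mul_mem ha (hb' x)

/-- Evaluation of the semigroup polynomial with coefficients `a, l = [a₁, …, aₙ]`:
`x ↦ a * x * a₁ * x * ⋯ * x * aₙ` (computed in `X¹ = WithOne X`). -/
def polyEval {X : Type*} [Semigroup X] (a : WithOne X) (l : List (WithOne X)) (x : X) :
    WithOne X :=
  l.foldl (fun acc b => acc * (x : WithOne X) * b) a

/-- `f : X → X¹` is a semigroup polynomial of degree `d ≥ 1`. -/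
def IsSemigroupPolynomial {X : Type*} [Semigroup X] (f : X → WithOne X) (d : ℕ) : Prop :=
  1 ≤ d ∧ ∃ (a : WithOne X) (l : List (WithOne X)), l.length = d ∧ ∀ x, f x = polyEval a l x

/-- `X` is polybounded. -/
def Polybounded (X : Type*) [Semigroup X] : Prop :=
  ∃ (k : ℕ) (f : Fin k → X → WithOne X) (d : Fin k → ℕ) (b : Fin k → X),
    (∀ i, IsSemigroupPolynomial (f i) (d i)) ∧ ∀ x : X, ∃ i, f i x = (b i : WithOne X)

/-- `X` is polyfinite. -/
def Polyfinite (X : Type*) [Semigroup X] : Prop :=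
  ∃ (d : ℕ) (F : Set X), F.Finite ∧ ∀ x y : X,
    ∃ (f : X → WithOne X) (m : ℕ), m ≤ d ∧ IsSemigroupPolynomial f m ∧
      (∃ u ∈ F, f x = (u : WithOne X)) ∧ ∃ v ∈ F, f y = (v : WithOne X)

/-- `X` is `B`-centrobounded over `B ⊆ E(X)`: there is `n ≥ 1` such that for every
`e ∈ B` and all `x, y ∈ ⋂_{a ∈ B} H_a/a`, if `w` is the inverse of `y*e` in the group
`H_e` and `(x*e)*w ∈ H_e ∩ Z(X)`, then `((x*e)*w)ⁿ` is an idempotent. -/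
def Centrobounded {X : Type*} [Semigroup X] (B : Set X) : Prop :=
  ∃ n : ℕ, ∀ e ∈ B, ∀ x ∈ ⋂ a ∈ B, HeCoideal X a, ∀ y ∈ ⋂ a ∈ B, HeCoideal X a,
    ∀ w ∈ maxSubgroup X e, (y * e) * w = e → w * (y * e) = e →
      (x * e) * w ∈ maxSubgroup X e → (x * e) * w ∈ centerSet X →
        spow ((x * e) * w) n ∈ idemSet X

/-- `B` is an antichain in the natural partial order `e ≤ f ⇔ ef = fe = e` on idempotents. -/
def IsIdemAntichain {X : Type*} [Semigroup X] (B : Set X) : Prop :=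
  ∀ e ∈ B, ∀ f ∈ B, e ≠ f → ¬(e * f = e ∧ f * e = e) ∧ ¬(e * f = f ∧ f * e = f)

/-!
A homomorphism `f : C →ₙ* Y` extends to `X →ₙ* WithZero Y` by sending the ideal `X ∖ C` to an
adjoined isolated zero. `WithZero Y` is again a zero-dimensional `T₁` topological semigroup, and
`range f` is the preimage of the range of the extension under the coercion `Y → WithZero Y`, hence
closed. For the projective statement, note that `X` is projectively `TzS`-closed iff every
homomorphic image of `X` in a `TzS` semigroup that is discrete is closed (pass to the kernel
congruence); discreteness of `range f` transfers to the range of the extension because `0` is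
isolated.
-/

namespace WithZero

variable {Y : Type*} [TopologicalSpace Y]

-- `Y` with an isolated point `0` adjoined.
instance : TopologicalSpace (WithZero Y) := .coinduced ((↑) : Y → WithZero Y) ‹_›

theorem isOpen_iff_isOpen_preimage_coe {s : Set (WithZero Y)} :
    IsOpen s ↔ IsOpen (((↑) : Y → WithZero Y) ⁻¹' s) := Iff.rfl

theorem isClosed_iff_isClosed_preimage_coe {s : Set (WithZero Y)} :
    IsClosed s ↔ IsClosed (((↑) : Y → WithZero Y) ⁻¹' s) := isClosed_coinduced

theorem continuous_coe : Continuous ((↑) : Y → WithZero Y) := continuous_coinduced_rng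

theorem isOpenMap_coe : IsOpenMap ((↑) : Y → WithZero Y) := fun U hU => by
  rwa [isOpen_iff_isOpen_preimage_coe, preimage_image_eq U coe_injective]

theorem isClosedMap_coe : IsClosedMap ((↑) : Y → WithZero Y) := fun U hU => by
  rwa [isClosed_iff_isClosed_preimage_coe, preimage_image_eq U coe_injective]

theorem isOpenEmbedding_coe : Topology.IsOpenEmbedding ((↑) : Y → WithZero Y) :=
  .of_continuous_injective_isOpenMap continuous_coe coe_injective isOpenMap_coe

theorem isClopen_singleton_zero : IsClopen ({0} : Set (WithZero Y)) := by
  have h : ((↑) : Y → WithZero Y) ⁻¹' {0} = ∅ := by ext; simp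
  rw [IsClopen, isClosed_iff_isClosed_preimage_coe, isOpen_iff_isOpen_preimage_coe, h]
  exact ⟨isClosed_empty, isOpen_empty⟩

instance [T1Space Y] : T1Space (WithZero Y) := by
  refine ⟨fun z => ?_⟩
  induction z using WithZero.recZeroCoe with
  | zero => exact isClopen_singleton_zero.isClosed
  | coe y => simpa using isClosedMap_coe _ (isClosed_singleton (x := y))

theorem continuousAt_mul_of_eq_zero [Mul Y] {p : WithZero Y × WithZero Y}
    (hp : p.1 = 0 ∨ p.2 = 0) : ContinuousAt (fun q : WithZero Y × WithZero Y => q.1 * q.2) p := by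
  refine continuousAt_const (y := (0 : WithZero Y)) |>.congr ?_
  rcases hp with hp | hp
  · filter_upwards [continuous_fst.continuousAt.preimage_mem_nhds
      (isClopen_singleton_zero.isOpen.mem_nhds hp)] with q hq
    simp_all
  · filter_upwards [continuous_snd.continuousAt.preimage_mem_nhds
      (isClopen_singleton_zero.isOpen.mem_nhds hp)] with q hq
    simp_all

instance [Mul Y] [ContinuousMul Y] : ContinuousMul (WithZero Y) := by
  refine ⟨continuous_iff_continuousAt.2 fun ⟨p, q⟩ => ?_⟩
  induction p using WithZero.recZeroCoe with
  | zero => exact continuousAt_mul_of_eq_zero (.inl rfl)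
  | coe a =>
    induction q using WithZero.recZeroCoe with
    | zero => exact continuousAt_mul_of_eq_zero (.inr rfl)
    | coe b =>
      refine ((isOpenEmbedding_coe.prodMap isOpenEmbedding_coe).continuousAt_iff
        (x := (a, b))).1 ?_
      simpa only [Function.comp_def, Prod.map, ← coe_mul] using
        (continuous_coe.comp continuous_mul).continuousAt

theorem discreteTopology_of_preimage_coe {s : Set (WithZero Y)}
    (hs : DiscreteTopology (((↑) : Y → WithZero Y) ⁻¹' s)) : DiscreteTopology s := by
  rw [discreteTopology_subtype_iff'] at hs ⊢
  intro z hz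
  induction z using WithZero.recZeroCoe with
  | zero => exact ⟨{0}, isClopen_singleton_zero.isOpen, by simpa using hz⟩
  | coe y =>
    obtain ⟨U, hU, hUs⟩ := hs y hz
    exact ⟨(↑) '' U, isOpenMap_coe U hU, by rw [← image_inter_preimage, hUs, image_singleton]⟩

theorem hasClopenBasis (hY : HasClopenBasis Y) : HasClopenBasis (WithZero Y) := by
  obtain ⟨B, hB, hbasis⟩ := hY
  have hclopen : ∀ s ∈ insert {0} (image ((↑) : Y → WithZero Y) '' B), IsClopen s := by
    rintro s (rfl | ⟨t, ht, rfl⟩)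
    exacts [isClopen_singleton_zero, ⟨isClosedMap_coe t (hB t ht).1, isOpenMap_coe t (hB t ht).2⟩]
  refine ⟨_, hclopen, isTopologicalBasis_of_isOpen_of_nhds (fun s hs => (hclopen s hs).isOpen) ?_⟩
  intro z U hzU hU
  induction z using WithZero.recZeroCoe with
  | zero => exact ⟨{0}, mem_insert _ _, rfl, singleton_subset_iff.2 hzU⟩
  | coe y =>
    obtain ⟨V, hVB, hyV, hVU⟩ := hbasis.exists_subset_of_mem_open hzU hU
    exact ⟨(↑) '' V, mem_insert_of_mem _ (mem_image_of_mem _ hVB), mem_image_of_mem _ hyV,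
      image_subset_iff.2 hVU⟩

end WithZero

namespace Con

variable {M P : Type*} [Mul M] [Mul P]

def kerLiftMulHom (f : M →ₙ* P) : (ker f).Quotient →ₙ* P where
  toFun q := q.liftOn f fun _ _ => id
  map_mul' p q := Con.induction_on₂ p q (map_mul f)

theorem kerLiftMulHom_injective (f : M →ₙ* P) : Function.Injective (kerLiftMulHom f) :=
  fun p q => Con.induction_on₂ p q fun _ _ h => (ker f).eq.2 h

theorem range_kerLiftMulHom (f : M →ₙ* P) : range (kerLiftMulHom f) = range f :=
  (Quotient.mk''_surjective.range_comp (kerLiftMulHom f)).symm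

theorem range_comp_mkMulHom (c : Con M) (f : c.Quotient →ₙ* P) :
    range (f.comp c.mkMulHom) = range f :=
  Quotient.mk''_surjective.range_comp _

end Con

theorem projectivelyTzSClosed_iff {X : Type u} [Semigroup X] :
    ProjectivelyTzSClosed X ↔
      ∀ (Y : Type u) [Semigroup Y] [TopologicalSpace Y] [ContinuousMul Y] [T1Space Y],
        HasClopenBasis Y → ∀ h : X →ₙ* Y, DiscreteTopology (range h) → IsClosed (range h) := by
  constructor
  · intro hX Y _ _ _ _ hY h hdisc
    rw [← Con.range_kerLiftMulHom] at hdisc ⊢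
    exact hX _ Y hY _ (Con.kerLiftMulHom_injective h) hdisc
  · intro hX c Y _ _ _ _ hY f _ hdisc
    rw [← Con.range_comp_mkMulHom] at hdisc ⊢
    exact hX Y hY _ hdisc

namespace Subsemigroup

variable {X Z : Type*} [Semigroup X] [Semigroup Z] {C : Subsemigroup X}

theorem mem_and_mem_of_mul_mem (hC : IsIdealSet X (univ \ (C : Set X))) {x y : X}
    (hxy : x * y ∈ C) : x ∈ C ∧ y ∈ C := by
  by_contra h
  rcases not_and_or.1 h with hx | hy
  · exact ((hC x ⟨trivial, hx⟩ y).1).2 hxy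
  · exact ((hC y ⟨trivial, hy⟩ x).2).2 hxy

open scoped Classical in
noncomputable def extendByZero (hC : IsIdealSet X (univ \ (C : Set X))) (f : C →ₙ* Z) :
    X →ₙ* WithZero Z where
  toFun x := if hx : x ∈ C then ↑(f ⟨x, hx⟩) else 0
  map_mul' x y := by
    by_cases hxy : x * y ∈ C
    · obtain ⟨hx, hy⟩ := mem_and_mem_of_mul_mem hC hxy
      simp only [hxy, hx, hy, dif_pos, ← WithZero.coe_mul, ← map_mul]
      rfl
    · have : x ∉ C ∨ y ∉ C := by
        by_contra! h
        exact hxy (C.mul_mem h.1 h.2)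
      rcases this with h | h <;> simp [hxy, h]

theorem preimage_range_extendByZero (hC : IsIdealSet X (univ \ (C : Set X))) (f : C →ₙ* Z) :
    ((↑) : Z → WithZero Z) ⁻¹' range (extendByZero hC f) = range f := by
  ext z
  constructor
  · rintro ⟨x, hx⟩
    by_cases hxC : x ∈ C
    · exact ⟨⟨x, hxC⟩, WithZero.coe_injective (by simpa [extendByZero, hxC] using hx)⟩
    · simp [extendByZero, hxC] at hx
  · rintro ⟨c, rfl⟩
    exact ⟨c, by simp [extendByZero]⟩

end Subsemigroup

theorem statement15 (X : Type u) [Semigroup X] (C : Subsemigroup X)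
    (hC : IsIdealSet X (Set.univ \ (C : Set X))) :
    (AbsolutelyTzSClosed X → AbsolutelyTzSClosed ↥C) ∧
    (ProjectivelyTzSClosed X → ProjectivelyTzSClosed ↥C) := by
  constructor
  · intro hX Y _ _ _ _ hY f
    rw [← Subsemigroup.preimage_range_extendByZero hC f]
    exact (hX _ (WithZero.hasClopenBasis hY) _).preimage WithZero.continuous_coe
  · rw [projectivelyTzSClosed_iff, projectivelyTzSClosed_iff]
    intro hX Y _ _ _ _ hY f hdisc
    rw [← Subsemigroup.preimage_range_extendByZero hC f] at hdisc ⊢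
    have hdisc' := WithZero.discreteTopology_of_preimage_coe hdisc
    exact (hX _ (WithZero.hasClopenBasis hY) _ hdisc').preimage WithZero.continuous_coe
end

section
/- Every chain-finite, group-finite, bounded, Clifford+finite, E-commutative semigroup is absolutely T₂S-closed. -/
universe u

open Set TopologicalSpace

/-! ### Auxiliary lemmas -/

namespace St16

open Filter Function

section SemigroupLemmas

variable {X : Type*} [Semigroup X]

theorem spow_succ (x : X) (k : ℕ) : spow x (k+1) = spow x k * x := rfl

@[simp] theorem spow_zero (x : X) : spow x 0 = x := rfl

theorem spow_add (x : X) (a b : ℕ) : spow x (a + b + 1) = spow x a * spow x b := by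
  induction b with
  | zero => rfl
  | succ b ih =>
      have : a + (b+1) + 1 = (a + b + 1) + 1 := by omega
      rw [this, spow_succ, ih, spow_succ, mul_assoc]

theorem spow_idem {s : X} (hs : s * s = s) (k : ℕ) : spow s k = s := by
  induction k with
  | zero => rfl
  | succ k ih => rw [spow_succ, ih, hs]

theorem spow_spow (x : X) (a b : ℕ) : spow (spow x a) b = spow x (a*b + a + b) := by
  induction b with
  | zero => norm_num
  | succ b ih =>
      rw [spow_succ, ih]
      have h1 : a*(b+1) + a + (b+1) = (a*b + a + b) + a + 1 := by ring
      rw [h1, spow_add]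

theorem comm_spow {a b : X} (h : a * b = b * a) (k : ℕ) : spow a k * b = b * spow a k := by
  induction k with
  | zero => exact h
  | succ k ih => rw [spow_succ, mul_assoc, h, ← mul_assoc, ih, mul_assoc]

theorem idem_mul_idem_comm_mem {X : Type*} [Semigroup X] (h5 : ECommutative X)
    {a b : X} (ha : a ∈ idemSet X) (hb : b ∈ idemSet X) : a * b ∈ idemSet X := by
  have hc : a * b = b * a := h5 a ha b hb
  show (a*b) * (a*b) = a*b
  calc (a*b) * (a*b) = a * ((b*a) * b) := by simp only [mul_assoc]
    _ = a * ((a*b) * b) := by rw [← hc]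
    _ = (a*a) * (b*b) := by simp only [mul_assoc]
    _ = a * b := by rw [ha, hb]

section MaxSubgroup

variable {e : X}

theorem maxSubgroup_mul_mem {a b : X} (ha : a ∈ maxSubgroup X e) (hb : b ∈ maxSubgroup X e) :
    a * b ∈ maxSubgroup X e := by
  obtain ⟨hae, hea, a', ha'e, hea', haa', ha'a⟩ := ha
  obtain ⟨hbe, heb, b', hb'e, heb', hbb', hb'b⟩ := hb
  refine ⟨by rw [mul_assoc, hbe], by rw [← mul_assoc, hea], b' * a', by rw [mul_assoc, ha'e],
    by rw [← mul_assoc, heb'], ?_, ?_⟩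
  · calc a * b * (b' * a') = a * (b * b') * a' := by simp only [mul_assoc]
      _ = a * e * a' := by rw [hbb']
      _ = a * a' := by rw [hae]
      _ = e := haa'
  · calc b' * a' * (a * b) = b' * (a' * a) * b := by simp only [mul_assoc]
      _ = b' * e * b := by rw [ha'a]
      _ = b' * b := by rw [hb'e]
      _ = e := hb'b

theorem spow_mem_maxSubgroup {x : X} (hx : x ∈ maxSubgroup X e) (k : ℕ) :
    spow x k ∈ maxSubgroup X e := by
  induction k with
  | zero => exact hx
  | succ k ih => exact maxSubgroup_mul_mem ih hx

theorem idem_mem_maxSubgroup_eq {z : X} (hz : z ∈ maxSubgroup X e) (hzz : z * z = z) :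
    z = e := by
  obtain ⟨hze, hez, w, hwe, hew, hzw, hwz⟩ := hz
  have h1 : z * (z * w) = z * w := by rw [← mul_assoc, hzz]
  rw [hzw] at h1
  rw [← hze, h1]

theorem e_mem_maxSubgroup (he : e ∈ idemSet X) : e ∈ maxSubgroup X e :=
  ⟨he, he, e, he, he, he, he⟩

theorem maxSubgroup_isSubgroupSet (he : e ∈ idemSet X) : IsSubgroupSet X (maxSubgroup X e) := by
  refine ⟨fun a ha b hb => maxSubgroup_mul_mem ha hb, e, e_mem_maxSubgroup he,
    fun x hx => ⟨hx.1, hx.2.1⟩, fun x hx => ?_⟩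
  obtain ⟨hxe, hex, w, hwe, hew, hxw, hwx⟩ := hx
  exact ⟨w, ⟨hwe, hew, x, hxe, hex, hwx, hxw⟩, hxw, hwx⟩

theorem mem_cliffordPart_iff {x : X} :
    x ∈ cliffordPart X ↔ ∃ e ∈ idemSet X, x ∈ maxSubgroup X e := by
  simp [cliffordPart]

/-- in a group `H_g`, the `K`-th power (if idempotent) is the identity `g`. -/
theorem spow_eq_idem_of_mem {x g : X} (hg : g ∈ idemSet X) (hx : x ∈ maxSubgroup X g)
    {K : ℕ} (hK : spow x K ∈ idemSet X) : spow x K = g :=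
  idem_mem_maxSubgroup_eq (spow_mem_maxSubgroup hx K) hK

theorem spow_K_succ_eq_self {x g : X} (hg : g ∈ idemSet X) (hx : x ∈ maxSubgroup X g)
    {K : ℕ} (hK : spow x K ∈ idemSet X) : spow x (K+1) = x := by
  rw [spow_succ, spow_eq_idem_of_mem hg hx hK, hx.2.1]

end MaxSubgroup

/-! ### products of lists in a semigroup -/

/-- `sprod a l = a * l₁ * l₂ * ⋯` -/
def sprod (a : X) (l : List X) : X := l.foldl (· * ·) a

@[simp] theorem sprod_nil (a : X) : sprod a [] = a := rfl

@[simp] theorem sprod_cons (a b : X) (l : List X) : sprod a (b :: l) = sprod (a*b) l := rfl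

theorem sprod_append_single (a b : X) (l : List X) :
    sprod a (l ++ [b]) = sprod a l * b := by
  simp [sprod, List.foldl_append]

theorem sprod_left_absorb {m a : X} (l : List X) (hma : m * a = m)
    (hl : ∀ b ∈ l, m * b = m) : m * sprod a l = m := by
  induction l generalizing a with
  | nil => exact hma
  | cons b l ih =>
      rw [sprod_cons]
      exact ih (by rw [← mul_assoc, hma, hl b (by simp)])
        (fun c hc => hl c (by simp [hc]))

theorem sprod_right_absorb {g a : X} (l : List X) (hag : a * g = a)
    (hl : ∀ b ∈ l, b * g = b) : sprod a l * g = sprod a l := by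
  induction l using List.reverseRecOn with
  | nil => exact hag
  | append_singleton l b _ =>
      rw [sprod_append_single, mul_assoc, hl b (by simp)]

theorem sprod_mem {S : Set X} (hS : ∀ u ∈ S, ∀ v ∈ S, u * v ∈ S) {a : X} (l : List X)
    (ha : a ∈ S) (hl : ∀ b ∈ l, b ∈ S) : sprod a l ∈ S := by
  induction l generalizing a with
  | nil => exact ha
  | cons b l ih =>
      exact ih (hS a ha b (hl b (by simp))) (fun c hc => hl c (by simp [hc]))

theorem sprod_mem_chain {C : Set X} (hC : ∀ u ∈ C, ∀ v ∈ C, u * v = u ∨ u * v = v)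
    {a : X} (l : List X) (ha : a ∈ C) (hl : ∀ b ∈ l, b ∈ C) : sprod a l ∈ C := by
  induction l generalizing a with
  | nil => exact ha
  | cons b l ih =>
      have hb : b ∈ C := hl b (by simp)
      have htl : ∀ c ∈ l, c ∈ C := fun c hc => hl c (by simp [hc])
      rw [sprod_cons]
      rcases hC a ha b hb with hh | hh
      · rw [hh]; exact ih ha htl
      · rw [hh]; exact ih hb htl

theorem map_sprod {Y : Type*} [Semigroup Y] (h : X →ₙ* Y) (a : X) (l : List X) :
    h (sprod a l) = sprod (h a) (l.map h) := by
  induction l generalizing a with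
  | nil => rfl
  | cons b l ih => simp [sprod_cons, ih, map_mul]

end SemigroupLemmas

theorem map_spow {X Y : Type*} [Semigroup X] [Semigroup Y] (h : X →ₙ* Y) (x : X) (k : ℕ) :
    h (spow x k) = spow (h x) k := by
  induction k with
  | zero => rfl
  | succ k ih => rw [spow_succ, spow_succ, map_mul, ih]

theorem continuous_spow {Y : Type*} [Semigroup Y] [TopologicalSpace Y] [ContinuousMul Y]
    (k : ℕ) : Continuous (fun t : Y => spow t k) := by
  induction k with
  | zero => exact continuous_id
  | succ k ih => exact ih.mul continuous_id

end St16

namespace St16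

open Filter Function

theorem wf_of_no_descending_seq {α : Type*} (r : α → α → Prop)
    (H : ∀ g : ℕ → α, ¬ ∀ n, r (g (n+1)) (g n)) : WellFounded r := by
  by_contra hwf
  have hex : ∃ a, ¬ Acc r a := by
    by_contra hall
    push_neg at hall
    exact hwf ⟨hall⟩
  have step : ∀ a, ¬ Acc r a → ∃ b, r b a ∧ ¬ Acc r b := by
    intro a ha
    by_contra hb
    push_neg at hb
    exact ha (Acc.intro a fun b hba => hb b hba)
  -- build the sequence
  classical
  obtain ⟨a0, ha0⟩ := hex
  let g : ℕ → {a : α // ¬ Acc r a} := fun n =>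
    Nat.rec ⟨a0, ha0⟩ (fun _ p => ⟨(step p.1 p.2).choose, (step p.1 p.2).choose_spec.2⟩) n
  exact H (fun n => (g n).1) (fun n => (step (g n).1 (g n).2).choose_spec.1)

section ChainArg

variable {X : Type*} [Semigroup X]

/-- pairwise products along a "descending" sequence. -/
theorem seq_pairwise {g : ℕ → X} (hadj : ∀ n, g (n+1) * g n = g (n+1)) :
    ∀ i j, i < j → g j * g i = g j := by
  intro i j
  induction j with
  | zero => omega
  | succ j ih =>
      intro hij
      rcases Nat.lt_succ_iff_lt_or_eq.mp hij with hh | hh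
      · calc g (j+1) * g i = (g (j+1) * g j) * g i := by rw [hadj j]
          _ = g (j+1) * (g j * g i) := mul_assoc _ _ _
          _ = g (j+1) * g j := by rw [ih hh]
          _ = g (j+1) := hadj j
      · subst hh; exact hadj _

/-- A strictly monotone (in either direction) sequence of commuting idempotents
contradicts chain-finiteness.  Stated for "descending" sequences:
`g (n+1) ≤ g n` where the order is `a ≤ b ↔ a * b = b * a = a`. -/
theorem chainFinite_no_desc_seq (h1 : ChainFinite X) (g : ℕ → X)
    (hidem : ∀ n, g n * g n = g n)
    (hcomm : ∀ i j, g i * g j = g j * g i)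
    (hadj : ∀ n, g (n+1) * g n = g (n+1))
    (hne : ∀ n, g (n+1) ≠ g n) : False := by
  have hpw : ∀ i j, i < j → g j * g i = g j := seq_pairwise hadj
  have hinj : Function.Injective g := by
    intro i j hij
    by_contra hne'
    rcases Nat.lt_or_ge i j with hh | hh
    · -- i < j, g i = g j
      rcases Nat.lt_or_ge (i+1) j with h2 | h2
      · have e1 : g (i+1) * g i = g (i+1) := hadj i
        have e2 : g j * g (i+1) = g j := hpw (i+1) j h2
        rw [← hij] at e2
        -- g i * g (i+1) = g i  and  g (i+1) * g i = g (i+1)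
        have hcc := hcomm i (i+1)
        exact hne i (by rw [← e1, ← hcc]; exact e2)
      · have : j = i + 1 := by omega
        exact hne i (by rw [← this, hij])
    · have hji : j < i := by omega
      rcases Nat.lt_or_ge (j+1) i with h2 | h2
      · have e1 : g (j+1) * g j = g (j+1) := hadj j
        have e2 : g i * g (j+1) = g i := hpw (j+1) i h2
        rw [hij] at e2
        have hcc := hcomm j (j+1)
        exact hne j (by rw [← e1, ← hcc]; exact e2)
      · have : i = j + 1 := by omega
        exact hne j (by rw [← this, hij])
  have hinf : (Set.range g).Infinite := Set.infinite_range_of_injective hinj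
  obtain ⟨x, hx, z, hz, hxz1, hxz2⟩ := h1 _ hinf
  obtain ⟨i, rfl⟩ := hx
  obtain ⟨j, rfl⟩ := hz
  rcases Nat.lt_trichotomy i j with hh | hh | hh
  · exact hxz2 (by rw [hcomm i j]; exact hpw i j hh)
  · subst hh; exact hxz1 (hidem i)
  · exact hxz1 (hpw j i hh)

/-- same, for ascending sequences. -/
theorem chainFinite_no_asc_seq (h1 : ChainFinite X) (g : ℕ → X)
    (hidem : ∀ n, g n * g n = g n)
    (hcomm : ∀ i j, g i * g j = g j * g i)
    (hadj : ∀ n, g n * g (n+1) = g n)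
    (hne : ∀ n, g n ≠ g (n+1)) : False := by
  have hpw : ∀ i j, i < j → g i * g j = g i := by
    intro i j
    induction j with
    | zero => omega
    | succ j ih =>
        intro hij
        rcases Nat.lt_succ_iff_lt_or_eq.mp hij with hh | hh
        · calc g i * g (j+1) = (g i * g j) * g (j+1) := by rw [ih hh]
            _ = g i * (g j * g (j+1)) := mul_assoc _ _ _
            _ = g i * g j := by rw [hadj j]
            _ = g i := ih hh
        · subst hh; exact hadj _
  have hinj : Function.Injective g := by
    intro i j hij
    by_contra hne'
    have key : ∀ a b, a < b → g a = g b → False := by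
      intro a b hab heq
      rcases Nat.lt_or_ge (a+1) b with h2 | h2
      · have e1 : g a * g (a+1) = g a := hadj a
        have e2 : g (a+1) * g b = g (a+1) := hpw (a+1) b h2
        rw [← heq] at e2
        exact hne a (by rw [← e1, hcomm a (a+1), e2])
      · have : b = a + 1 := by omega
        subst this
        exact hne a heq
    rcases Nat.lt_trichotomy i j with hh | hh | hh
    · exact key i j hh hij
    · exact hne' hh
    · exact key j i hh hij.symm
  have hinf : (Set.range g).Infinite := Set.infinite_range_of_injective hinj
  obtain ⟨x, hx, z, hz, hxz1, hxz2⟩ := h1 _ hinf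
  obtain ⟨i, rfl⟩ := hx
  obtain ⟨j, rfl⟩ := hz
  rcases Nat.lt_trichotomy i j with hh | hh | hh
  · exact hxz1 (hpw i j hh)
  · subst hh; exact hxz1 (hidem i)
  · exact hxz2 (by rw [hcomm i j]; exact hpw j i hh)

end ChainArg

end St16

namespace St16

open Filter Function

section Inf

variable {X : Type*} [Semigroup X]

/-- strict order `a < b` on idempotents : `a*b = a`, used descending. -/
def rdec (X : Type*) [Semigroup X] (a b : X) : Prop :=
  a ∈ idemSet X ∧ b ∈ idemSet X ∧ a * b = a ∧ a ≠ b

/-- `b < a` on idempotents, used for maximality. -/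
def rGTE (X : Type*) [Semigroup X] (a b : X) : Prop :=
  a ∈ idemSet X ∧ b ∈ idemSet X ∧ b * a = b ∧ a ≠ b

theorem wf_rdec (h1 : ChainFinite X) (h5 : ECommutative X) : WellFounded (rdec X) := by
  refine wf_of_no_descending_seq _ (fun g hg => ?_)
  have hmem : ∀ n, g n ∈ idemSet X := fun n =>
    Nat.casesOn n (hg 0).2.1 (fun m => (hg m).1)
  exact chainFinite_no_desc_seq h1 g (fun n => hmem n)
    (fun i j => h5 _ (hmem i) _ (hmem j)) (fun n => (hg n).2.2.1) (fun n => (hg n).2.2.2)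

theorem wf_rGTE (h1 : ChainFinite X) (h5 : ECommutative X) : WellFounded (rGTE X) := by
  refine wf_of_no_descending_seq _ (fun g hg => ?_)
  have hmem : ∀ n, g n ∈ idemSet X := fun n =>
    Nat.casesOn n (hg 0).2.1 (fun m => (hg m).1)
  exact chainFinite_no_asc_seq h1 g (fun n => hmem n)
    (fun i j => h5 _ (hmem i) _ (hmem j)) (fun n => (hg n).2.2.1)
    (fun n => fun hh => (hg n).2.2.2 hh.symm)

/-- Existence of infima (as finite products) in the chain-finite semilattice of
idempotents. -/
theorem inf_exists (h1 : ChainFinite X) (h5 : ECommutative X) (T : Set X)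
    (hT : T ⊆ idemSet X) (hne : T.Nonempty) :
    ∃ (a : X) (l : List X), a ∈ T ∧ (∀ b ∈ l, b ∈ T) ∧ sprod a l ∈ idemSet X ∧
      ∀ t ∈ T, sprod a l * t = sprod a l := by
  classical
  obtain ⟨t0, ht0⟩ := hne
  set Z : Set X := {z | ∃ a l, a ∈ T ∧ (∀ b ∈ l, b ∈ T) ∧ z = sprod a l} with hZ
  have hZne : Z.Nonempty := ⟨t0, t0, [], ht0, by simp, rfl⟩
  have hZidem : ∀ z ∈ Z, z ∈ idemSet X := by
    rintro z ⟨a, l, ha, hl, rfl⟩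
    exact sprod_mem (fun u hu v hv => idem_mul_idem_comm_mem h5 hu hv) l (hT ha)
      (fun b hb => hT (hl b hb))
  obtain ⟨mz, hmz, hmin⟩ := (wf_rdec h1 h5).has_min Z hZne
  obtain ⟨a, l, ha, hl, rfl⟩ := hmz
  refine ⟨a, l, ha, hl, hZidem _ ⟨a, l, ha, hl, rfl⟩, fun t ht => ?_⟩
  by_contra hmt
  set m := sprod a l with hm
  have hmZ : m ∈ Z := ⟨a, l, ha, hl, rfl⟩
  have hmtZ : m * t ∈ Z := ⟨a, l ++ [t], ha, by
    intro b hb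
    rcases List.mem_append.mp hb with hb | hb
    · exact hl b hb
    · simp at hb; subst hb; exact ht, (sprod_append_single a t l).symm⟩
  refine hmin (m * t) hmtZ ⟨hZidem _ hmtZ, hZidem _ hmZ, ?_, hmt⟩
  -- (m*t)*m = m*t
  have hcomm : t * m = m * t := h5 t (hT ht) m (hZidem m hmZ)
  have hmm : m * m = m := hZidem m hmZ
  calc m * t * m = m * (t * m) := mul_assoc _ _ _
    _ = m * (m * t) := by rw [hcomm]
    _ = (m * m) * t := (mul_assoc _ _ _).symm
    _ = m * t := by rw [hmm]

/-- weak ascending pairwise lemma. -/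
theorem seq_pairwise_asc_weak {t : ℕ → X} (hidem : ∀ n, t n * t n = t n)
    (hadj : ∀ n, t n * t (n+1) = t n) : ∀ i j, i ≤ j → t i * t j = t i := by
  intro i j
  induction j with
  | zero => intro hij; have : i = 0 := by omega
            subst this; exact hidem 0
  | succ j ih =>
      intro hij
      rcases Nat.lt_succ_iff_lt_or_eq.mp (Nat.lt_succ_iff.mpr hij) with hh | hh
      · have hij' : i ≤ j := by omega
        calc t i * t (j+1) = (t i * t j) * t (j+1) := by rw [ih hij']
          _ = t i * (t j * t (j+1)) := mul_assoc _ _ _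
          _ = t i * t j := by rw [hadj j]
          _ = t i := ih hij'
      · subst hh; exact hidem _

end Inf

end St16

namespace St16

open Filter Function

section Lifting

variable {X Y : Type*} [Semigroup X] [Semigroup Y]

/-- Lifting lemma: there is no strictly ascending sequence in the image `h[E(X)]`. -/
theorem lifting (h1 : ChainFinite X) (h5 : ECommutative X) (h : X →ₙ* Y)
    (c : ℕ → Y) (m : ℕ → X) (hmE : ∀ j, m j ∈ idemSet X) (hhm : ∀ j, h (m j) = c j)
    (hadj : ∀ j, c j * c (j+1) = c j) (hne : ∀ j, c j ≠ c (j+1)) : False := by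
  classical
  have hcidem : ∀ j, c j * c j = c j := by
    intro j; rw [← hhm j, ← map_mul, hmE j]
  have hccomm : ∀ i j, c i * c j = c j * c i := by
    intro i j; rw [← hhm i, ← hhm j, ← map_mul, ← map_mul, h5 _ (hmE i) _ (hmE j)]
  have hpw : ∀ i j, i ≤ j → c i * c j = c i := seq_pairwise_asc_weak hcidem hadj
  have hcinj : Function.Injective c := by
    intro i j hij
    by_contra hne'
    have key : ∀ a b, a < b → c a = c b → False := by
      intro a b hab heq
      rcases Nat.lt_or_ge (a+1) b with h2 | h2
      · have e1 : c a * c (a+1) = c a := hadj a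
        have e2 : c (a+1) * c b = c (a+1) := hpw (a+1) b (by omega)
        rw [← heq] at e2
        exact hne a (by rw [← e1, hccomm a (a+1), e2])
      · have : b = a + 1 := by omega
        subst this; exact hne a heq
    rcases Nat.lt_trichotomy i j with hh | hh | hh
    · exact key i j hh hij
    · exact hne' hh
    · exact key j i hh hij.symm
  -- infima of tails
  have H : ∀ i : ℕ, ∃ (a : X) (l : List X), a ∈ m '' {j | i ≤ j} ∧
      (∀ b ∈ l, b ∈ m '' {j | i ≤ j}) ∧ sprod a l ∈ idemSet X ∧
      ∀ t ∈ m '' {j | i ≤ j}, sprod a l * t = sprod a l := by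
    intro i
    refine inf_exists h1 h5 _ ?_ ⟨m i, i, by simp, rfl⟩
    rintro x ⟨j, hj, rfl⟩; exact hmE j
  choose a l ha hl hidem hlb using H
  set t : ℕ → X := fun i => sprod (a i) (l i) with ht
  -- image of t i lies in the tail chain
  have himg : ∀ i, ∃ k, i ≤ k ∧ h (t i) = c k := by
    intro i
    have hchain : ∀ u ∈ c '' {j | i ≤ j}, ∀ v ∈ c '' {j | i ≤ j},
        u * v = u ∨ u * v = v := by
      rintro u ⟨p, hp, rfl⟩ v ⟨q, hq, rfl⟩
      rcases le_or_gt p q with hh | hh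
      · exact Or.inl (hpw p q hh)
      · exact Or.inr (by rw [hccomm p q]; exact hpw q p (le_of_lt hh))
    have : h (t i) ∈ c '' {j | i ≤ j} := by
      rw [ht, map_sprod]
      refine sprod_mem_chain hchain _ ?_ ?_
      · obtain ⟨j, hj, hje⟩ := ha i
        exact ⟨j, hj, by rw [← hje, hhm]⟩
      · intro b hb
        obtain ⟨b', hb', rfl⟩ := List.mem_map.mp hb
        obtain ⟨j, hj, hje⟩ := hl i b' hb'
        exact ⟨j, hj, by rw [← hje, hhm]⟩
    obtain ⟨k, hk, hke⟩ := this
    exact ⟨k, hk, hke.symm⟩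
  choose k hk hke using himg
  -- t is weakly ascending
  have htadj : ∀ i, t i * t (i+1) = t i := by
    intro i
    refine sprod_left_absorb _ ?_ ?_
    · refine hlb i _ ?_
      obtain ⟨j, hj, hje⟩ := ha (i+1)
      have hj' : i+1 ≤ j := hj
      exact ⟨j, show i ≤ j by omega, hje⟩
    · intro b hb
      refine hlb i _ ?_
      obtain ⟨j, hj, hje⟩ := hl (i+1) b hb
      have hj' : i+1 ≤ j := hj
      exact ⟨j, show i ≤ j by omega, hje⟩
  have htidem : ∀ i, t i * t i = t i := fun i => hidem i
  have htpw : ∀ i j, i ≤ j → t i * t j = t i := seq_pairwise_asc_weak htidem htadj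
  -- range of t is infinite
  have hrinf : (Set.range t).Infinite := by
    intro hfin
    have h2 : (Set.range fun i => c (k i)).Finite := by
      have : (Set.range fun i => c (k i)) ⊆ h '' (Set.range t) := by
        rintro _ ⟨i, rfl⟩
        exact ⟨t i, ⟨i, rfl⟩, (hke i)⟩
      exact (hfin.image h).subset this
    have h3 : (Set.range k).Finite := by
      have himg2 : c '' Set.range k = Set.range fun i => c (k i) := by
        ext z; constructor
        · rintro ⟨_, ⟨i, rfl⟩, rfl⟩; exact ⟨i, rfl⟩
        · rintro ⟨i, rfl⟩; exact ⟨k i, ⟨i, rfl⟩, rfl⟩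
      exact Set.Finite.of_finite_image (himg2 ▸ h2) (hcinj.injOn)
    obtain ⟨b, hb⟩ := h3.bddAbove
    have := hk (b+1)
    have hkb : k (b+1) ≤ b := hb ⟨b+1, rfl⟩
    omega
  obtain ⟨x, hx, z, hz, hxz1, hxz2⟩ := h1 _ hrinf
  obtain ⟨i, rfl⟩ := hx
  obtain ⟨j, rfl⟩ := hz
  rcases le_or_gt i j with hh | hh
  · exact hxz1 (htpw i j hh)
  · exact hxz2 (by
      have hc := h5 _ (hidem i) _ (hidem j)
      rw [hc]; exact htpw j i (le_of_lt hh))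

/-- the strict relation `b < a` on the image `h[E(X)]`; well-founded by `lifting`. -/
def rGTB (h : X →ₙ* Y) (a b : Y) : Prop :=
  (∃ ma ∈ idemSet X, h ma = a) ∧ (∃ mb ∈ idemSet X, h mb = b) ∧ b * a = b ∧ a ≠ b

theorem wf_rGTB (h1 : ChainFinite X) (h5 : ECommutative X) (h : X →ₙ* Y) :
    WellFounded (rGTB h) := by
  refine wf_of_no_descending_seq _ (fun g hg => ?_)
  classical
  have hrep : ∀ n, ∃ mb ∈ idemSet X, h mb = g n := fun n =>
    Nat.casesOn n (hg 0).2.1 (fun m => (hg m).1)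
  choose mm hmE hhm using hrep
  exact lifting h1 h5 h g mm hmE hhm (fun j => (hg j).2.2.1)
    (fun j => fun hh => (hg j).2.2.2 hh.symm)

end Lifting

end St16

namespace St16

open Filter Function Set Topology

section Core

variable {X Y : Type u} [Semigroup X] [Semigroup Y] [TopologicalSpace Y]
  [ContinuousMul Y] [T2Space Y]

theorem core (h1 : ChainFinite X) (h5 : ECommutative X) (h : X →ₙ* Y) (K : ℕ)
    (hfidem : ∀ x : X, spow x K ∈ idemSet X)
    (W : Ultrafilter X) (q : Y)
    (hq : Tendsto (fun x => h (spow x K)) (↑W) (𝓝 q))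
    (hqq : q * q = q) :
    ∃ e', e' ∈ idemSet X ∧ h e' = q ∧ ({x : X | e' * spow x K = e'} ∈ W) ∧
      ∀ g : X, ({x : X | spow x K * g = spow x K} ∈ W) → e' * g = e' := by
  classical
  -- membership of pullbacks of neighborhoods of `q`
  have hpull : ∀ O : Set Y, O ∈ 𝓝 q → {x : X | h (spow x K) ∈ O} ∈ W := by
    intro O hO
    exact Filter.mem_map.mp (hq hO)
  obtain ⟨x0, -⟩ := W.nonempty_of_mem Filter.univ_mem
  -- the set M of idempotent lower bounds of W-most K-th powers
  set M : Set X := {m : X | m ∈ idemSet X ∧ {x : X | m * spow x K = m} ∈ W} with hM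
  have hMne : M.Nonempty := by
    obtain ⟨a, l, ha, hl, hid, hlb⟩ := inf_exists h1 h5 (Set.range (fun x => spow x K))
      (by rintro _ ⟨x, rfl⟩; exact hfidem x) ⟨spow x0 K, x0, rfl⟩
    refine ⟨sprod a l, hid, ?_⟩
    have : {x : X | sprod a l * spow x K = sprod a l} = Set.univ := by
      ext x; simp only [Set.mem_setOf_eq, Set.mem_univ, iff_true]
      exact hlb _ ⟨x, rfl⟩
    rw [this]; exact Filter.univ_mem
  obtain ⟨e', he'M, he'max⟩ := (wf_rGTE h1 h5).has_min M hMne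
  have he'idem : e' ∈ idemSet X := he'M.1
  have hev : {x : X | e' * spow x K = e'} ∈ W := he'M.2
  -- representation of e' as a product of K-th powers from any W-large set
  have repr : ∀ S : Set X, S ∈ W → ∃ (a : X) (l : List X),
      (a ∈ (fun x => spow x K) '' (S ∩ {x | e' * spow x K = e'})) ∧
      (∀ b ∈ l, b ∈ (fun x => spow x K) '' (S ∩ {x | e' * spow x K = e'})) ∧
      e' = sprod a l := by
    intro S hS
    set S' := S ∩ {x | e' * spow x K = e'} with hS'
    have hS'W : S' ∈ W := Filter.inter_mem hS hev
    have hS'ne : S'.Nonempty := W.nonempty_of_mem hS'W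
    obtain ⟨a, l, ha, hl, hid, hlb⟩ := inf_exists h1 h5 ((fun x => spow x K) '' S')
      (by rintro _ ⟨x, hx, rfl⟩; exact hfidem x) (hS'ne.image _)
    have hm''M : sprod a l ∈ M := by
      refine ⟨hid, Filter.mem_of_superset hS'W ?_⟩
      intro x hx
      exact hlb _ ⟨x, hx, rfl⟩
    have he'le : e' * sprod a l = e' := by
      refine sprod_left_absorb l ?_ ?_
      · obtain ⟨xa, hxa, rfl⟩ := ha; exact hxa.2
      · intro b hb; obtain ⟨xb, hxb, rfl⟩ := hl b hb; exact hxb.2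
    have : sprod a l = e' := by
      by_contra hne
      exact he'max _ hm''M ⟨hid, he'idem, he'le, hne⟩
    exact ⟨a, l, ha, hl, this.symm⟩
  -- the key fact : W-most K-th powers lie above q in the image
  have hKEY : {x : X | q * h (spow x K) = q} ∈ W := by
    by_contra hKEY
    -- the set M_Y in the image
    set MY : Set Y := {c : Y | (∃ m ∈ idemSet X, h m = c) ∧
      {x : X | c * h (spow x K) = c} ∈ W} with hMY
    have hMYne : h e' ∈ MY := by
      refine ⟨⟨e', he'idem, rfl⟩, Filter.mem_of_superset hev ?_⟩
      intro x hx
      show h e' * h (spow x K) = h e'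
      rw [← map_mul, hx]
    obtain ⟨mst, hmstMY, hmstmax⟩ := (wf_rGTB h1 h5 h).has_min MY ⟨h e', hMYne⟩
    obtain ⟨mX, hmXidem, hmXe⟩ := hmstMY.1
    have hmstidem : mst * mst = mst := by rw [← hmXe, ← map_mul, hmXidem]
    have hTst : {x : X | mst * h (spow x K) = mst} ∈ W := hmstMY.2
    -- every element of MY lies below mst
    have hupper : ∀ c ∈ MY, c * mst = c := by
      rintro c ⟨⟨mc, hmcidem, hmce⟩, hcW⟩
      set S := {x : X | c * h (spow x K) = c} ∩ {x : X | mst * h (spow x K) = mst}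
        with hS
      have hSW : S ∈ W := Filter.inter_mem hcW hTst
      obtain ⟨a, l, ha, hl, hid, hlb⟩ := inf_exists h1 h5 ((fun x => spow x K) '' S)
        (by rintro _ ⟨x, hx, rfl⟩; exact hfidem x) ((W.nonempty_of_mem hSW).image _)
      have hIMY : h (sprod a l) ∈ MY := by
        refine ⟨⟨sprod a l, hid, rfl⟩, Filter.mem_of_superset hSW ?_⟩
        intro x hx
        show h (sprod a l) * h (spow x K) = h (sprod a l)
        rw [← map_mul, hlb _ ⟨x, hx, rfl⟩]
      have hcle : c * h (sprod a l) = c := by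
        rw [map_sprod]
        refine sprod_left_absorb _ ?_ ?_
        · obtain ⟨xa, hxa, rfl⟩ := ha; exact hxa.1
        · intro b hb
          obtain ⟨b', hb', rfl⟩ := List.mem_map.mp hb
          obtain ⟨xb, hxb, rfl⟩ := hl b' hb'
          exact hxb.1
      have hmstle : mst * h (sprod a l) = mst := by
        rw [map_sprod]
        refine sprod_left_absorb _ ?_ ?_
        · obtain ⟨xa, hxa, rfl⟩ := ha; exact hxa.2
        · intro b hb
          obtain ⟨b', hb', rfl⟩ := List.mem_map.mp hb
          obtain ⟨xb, hxb, rfl⟩ := hl b' hb'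
          exact hxb.2
      have heq : h (sprod a l) = mst := by
        by_contra hne
        exact hmstmax _ hIMY ⟨⟨sprod a l, hid, rfl⟩, ⟨mX, hmXidem, hmXe⟩, hmstle, hne⟩
      rw [← heq]; exact hcle
    -- now suppose q ≠ mst and derive an infinite descending chain
    have hCLAIM : q = mst := by
      by_contra hneq
      obtain ⟨V, V', hVo, hV'o, hqV, hmV', hdisj⟩ := t2_separation hneq
      -- shrinking sequence of neighborhoods
      have step : ∀ O : Set Y, IsOpen O → q ∈ O → ∃ O' : Set Y, IsOpen O' ∧ q ∈ O' ∧
          O' ⊆ O ∧ ∀ a ∈ O', ∀ b ∈ O', a * b ∈ O := by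
        intro O hOo hqO
        have hmul : Tendsto (fun p : Y × Y => p.1 * p.2) (𝓝 (q, q)) (𝓝 (q * q)) :=
          continuous_mul.tendsto (q, q)
        have hOq : O ∈ 𝓝 (q * q) := by rw [hqq]; exact hOo.mem_nhds hqO
        obtain ⟨u, hu, v, hv, huv⟩ := mem_nhds_prod_iff.mp (hmul hOq)
        obtain ⟨u', hu'sub, hu'o, hqu'⟩ := mem_nhds_iff.mp hu
        obtain ⟨v', hv'sub, hv'o, hqv'⟩ := mem_nhds_iff.mp hv
        refine ⟨u' ∩ v' ∩ O, (hu'o.inter hv'o).inter hOo, ⟨⟨hqu', hqv'⟩, hqO⟩,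
          fun z hz => hz.2, ?_⟩
        intro a ha b hb
        exact huv (Set.mk_mem_prod (hu'sub ha.1.1) (hv'sub hb.1.2))
      set Wseq : ℕ → {O : Set Y // IsOpen O ∧ q ∈ O} := fun n => Nat.rec ⟨V, hVo, hqV⟩
        (fun _ p => ⟨(step p.1 p.2.1 p.2.2).choose, (step p.1 p.2.1 p.2.2).choose_spec.1,
          (step p.1 p.2.1 p.2.2).choose_spec.2.1⟩) n with hWseq
      have hWspec : ∀ j, (Wseq (j+1)).1 ⊆ (Wseq j).1 ∧
          ∀ a ∈ (Wseq (j+1)).1, ∀ b ∈ (Wseq (j+1)).1, a * b ∈ (Wseq j).1 := by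
        intro j
        exact ⟨(step (Wseq j).1 (Wseq j).2.1 (Wseq j).2.2).choose_spec.2.2.1,
          (step (Wseq j).1 (Wseq j).2.1 (Wseq j).2.2).choose_spec.2.2.2⟩
      have hWnhds : ∀ j, (Wseq j).1 ∈ 𝓝 q := fun j => (Wseq j).2.1.mem_nhds (Wseq j).2.2
      have hWV : ∀ j, (Wseq j).1 ⊆ V := by
        intro j
        induction j with
        | zero => exact fun z hz => hz
        | succ j ih => exact fun z hz => ih ((hWspec j).1 hz)
      -- the recursive descending sequence
      set A0 : Set X := {x : X | mst * h (spow x K) = mst} ∩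
        {x : X | h (spow x K) ∈ (Wseq 1).1} with hA0
      have hA0W : A0 ∈ W := Filter.inter_mem hTst (hpull _ (hWnhds 1))
      obtain ⟨z0, hz0⟩ := W.nonempty_of_mem hA0W
      set Astep : ℕ → X → Set X := fun j z => {x : X | mst * h (spow x K) = mst ∧
        h (spow x K) ∈ (Wseq (j+2)).1 ∧ h z * h (spow x K) ≠ h z} with hAstep
      set gx : ℕ → X := fun n => Nat.rec (spow z0 K)
        (fun j z => if hA : (Astep j z).Nonempty then z * spow hA.choose K else z) n
        with hgxdef
      have hgx0 : gx 0 = spow z0 K := rfl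
      have hgxs : ∀ j, gx (j+1) =
          if hA : (Astep j (gx j)).Nonempty then gx j * spow hA.choose K else gx j :=
        fun j => rfl
      -- the invariant
      have hInv : ∀ j, gx j ∈ idemSet X ∧ mst * h (gx j) = mst ∧
          (∀ t ∈ (Wseq (j+1)).1, h (gx j) * t ∈ V) ∧ h (gx j) ∈ V := by
        intro j
        induction j with
        | zero =>
            refine ⟨hfidem z0, hz0.1, ?_, hWV 1 hz0.2⟩
            intro t ht
            exact (hWspec 0).2 _ hz0.2 _ ht
        | succ j ih =>
            obtain ⟨hidem, hmeq, hprodV, hmemV⟩ := ih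
            -- Astep is W-large, hence nonempty
            have hne3 : {x : X | h (gx j) * h (spow x K) ≠ h (gx j)} ∈ W := by
              by_contra hcon
              have : {x : X | h (gx j) * h (spow x K) ≠ h (gx j)}ᶜ ∈ W :=
                Ultrafilter.compl_mem_iff_notMem.mpr hcon
              have hcl : {x : X | h (gx j) * h (spow x K) = h (gx j)} ∈ W := by
                refine Filter.mem_of_superset this ?_
                intro x hx
                simpa using hx
              have hgMY : h (gx j) ∈ MY := ⟨⟨gx j, hidem, rfl⟩, hcl⟩
              have h1' : h (gx j) * mst = h (gx j) := hupper _ hgMY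
              have hcm : h (gx j) * mst = mst * h (gx j) := by
                rw [← hmXe, ← map_mul, ← map_mul, h5 _ hidem _ hmXidem]
              have : h (gx j) = mst := by rw [← h1', hcm, hmeq]
              exact (Set.disjoint_left.mp hdisj (this ▸ hmemV)) hmV'
            have hAW : Astep j (gx j) ∈ W := by
              have : Astep j (gx j) = ({x : X | mst * h (spow x K) = mst} ∩
                  {x : X | h (spow x K) ∈ (Wseq (j+2)).1}) ∩
                  {x : X | h (gx j) * h (spow x K) ≠ h (gx j)} := by
                ext x; simp only [hAstep, Set.mem_setOf_eq, Set.mem_inter_iff]; tauto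
              rw [this]
              exact Filter.inter_mem (Filter.inter_mem hTst (hpull _ (hWnhds (j+2)))) hne3
            have hA : (Astep j (gx j)).Nonempty := W.nonempty_of_mem hAW
            have hgx1 : gx (j+1) = gx j * spow hA.choose K := by
              rw [hgxs j, dif_pos hA]
            obtain ⟨hc1, hc2, hc3⟩ := hA.choose_spec
            constructor
            · rw [hgx1]; exact idem_mul_idem_comm_mem h5 hidem (hfidem _)
            refine ⟨?_, ?_, ?_⟩
            · rw [hgx1, map_mul, ← mul_assoc, hmeq, hc1]
            · intro t ht
              rw [hgx1, map_mul, mul_assoc]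
              exact hprodV _ ((hWspec (j+1)).2 _ hc2 _ ht)
            · rw [hgx1, map_mul]
              exact hprodV _ ((hWspec (j+1)).1 hc2)
      -- now produce the infinite descending chain
      have hAW : ∀ j, (Astep j (gx j)).Nonempty := by
        intro j
        obtain ⟨hidem, hmeq, hprodV, hmemV⟩ := hInv j
        have hne3 : {x : X | h (gx j) * h (spow x K) ≠ h (gx j)} ∈ W := by
          by_contra hcon
          have : {x : X | h (gx j) * h (spow x K) ≠ h (gx j)}ᶜ ∈ W :=
            Ultrafilter.compl_mem_iff_notMem.mpr hcon
          have hcl : {x : X | h (gx j) * h (spow x K) = h (gx j)} ∈ W := by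
            refine Filter.mem_of_superset this ?_
            intro x hx
            simpa using hx
          have hgMY : h (gx j) ∈ MY := ⟨⟨gx j, hidem, rfl⟩, hcl⟩
          have h1' : h (gx j) * mst = h (gx j) := hupper _ hgMY
          have hcm : h (gx j) * mst = mst * h (gx j) := by
            rw [← hmXe, ← map_mul, ← map_mul, h5 _ hidem _ hmXidem]
          have : h (gx j) = mst := by rw [← h1', hcm, hmeq]
          exact (Set.disjoint_left.mp hdisj (this ▸ hmemV)) hmV'
        refine W.nonempty_of_mem ?_
        have : Astep j (gx j) = ({x : X | mst * h (spow x K) = mst} ∩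
            {x : X | h (spow x K) ∈ (Wseq (j+2)).1}) ∩
            {x : X | h (gx j) * h (spow x K) ≠ h (gx j)} := by
          ext x; simp only [hAstep, Set.mem_setOf_eq, Set.mem_inter_iff]; tauto
        rw [this]
        exact Filter.inter_mem (Filter.inter_mem hTst (hpull _ (hWnhds (j+2)))) hne3
      have hadjX : ∀ j, gx (j+1) * gx j = gx (j+1) := by
        intro j
        have hgx1 : gx (j+1) = gx j * spow (hAW j).choose K := by
          rw [hgxs j, dif_pos (hAW j)]
        have hcomm : spow (hAW j).choose K * gx j = gx j * spow (hAW j).choose K :=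
          h5 _ (hfidem _) _ (hInv j).1
        rw [hgx1, mul_assoc, hcomm, ← mul_assoc, (hInv j).1]
      have hneX : ∀ j, gx (j+1) ≠ gx j := by
        intro j heq
        have hgx1 : gx (j+1) = gx j * spow (hAW j).choose K := by
          rw [hgxs j, dif_pos (hAW j)]
        have hc3 := (hAW j).choose_spec.2.2
        apply hc3
        rw [← map_mul, ← hgx1, heq]
      exact chainFinite_no_desc_seq h1 gx (fun n => (hInv n).1)
        (fun i j => h5 _ (hInv i).1 _ (hInv j).1) hadjX hneX
    -- but then hTst contradicts hKEY
    apply hKEY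
    rw [hCLAIM]
    exact hTst
  -- conclude : h e' = q
  have hdirB : h e' * q = h e' := by
    have t1 : Tendsto (fun x => h e' * h (spow x K)) (↑W) (𝓝 (h e' * q)) :=
      tendsto_const_nhds.mul hq
    have t2 : Tendsto (fun x => h e' * h (spow x K)) (↑W) (𝓝 (h e')) := by
      refine Filter.Tendsto.congr' ?_ (tendsto_const_nhds (α := X) (f := ↑W))
      filter_upwards [hev] with x hx
      rw [← map_mul, hx]
    exact tendsto_nhds_unique t1 t2
  have hdirA : q * h e' = q := by
    obtain ⟨a, l, ha, hl, hre⟩ := repr _ hKEY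
    rw [hre, map_sprod]
    refine sprod_left_absorb _ ?_ ?_
    · obtain ⟨xa, hxa, rfl⟩ := ha; exact hxa.1
    · intro b hb
      obtain ⟨b', hb', rfl⟩ := List.mem_map.mp hb
      obtain ⟨xb, hxb, rfl⟩ := hl b' hb'
      exact hxb.1
  have hcomm : h e' * q = q * h e' := by
    have t1 : Tendsto (fun x => h e' * h (spow x K)) (↑W) (𝓝 (h e' * q)) :=
      tendsto_const_nhds.mul hq
    have t2 : Tendsto (fun x => h (spow x K) * h e') (↑W) (𝓝 (q * h e')) :=
      hq.mul tendsto_const_nhds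
    refine tendsto_nhds_unique (t1.congr ?_) t2
    intro x
    rw [← map_mul, ← map_mul, h5 _ he'idem _ (hfidem x)]
  have : h e' = q := by rw [← hdirA, ← hcomm, hdirB]
  exact ⟨e', he'idem, this, hev, fun g hg => by
    obtain ⟨a, l, ha, hl, hre⟩ := repr _ hg
    rw [hre]
    refine sprod_right_absorb _ ?_ ?_
    · obtain ⟨xa, hxa, rfl⟩ := ha; exact hxa.1
    · intro b hb
      obtain ⟨xb, hxb, rfl⟩ := hl b hb
      exact hxb.1⟩

end Core

end St16

namespace St16

open Filter Function Set Topology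

section Conj

variable {X : Type*} [Semigroup X]

/-- iterated conjugates `c_j = x^j e' x^{-j}` inside the group of `x`. -/
def cIt (e' : X) (K : ℕ) (x : X) : ℕ → X :=
  fun j => Nat.rec e' (fun _ c => x * c * spow x (K-1)) j

/-- left-fold product `c_0 * c_1 * ⋯ * c_j`. -/
def sAf (e' : X) (K : ℕ) (x : X) : ℕ → X :=
  fun j => Nat.rec (cIt e' K x 0) (fun i s => s * cIt e' K x (i+1)) j

/-- left-fold product `c_1 * c_2 * ⋯ * c_{j+1}`. -/
def sAsh (e' : X) (K : ℕ) (x : X) : ℕ → X :=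
  fun j => Nat.rec (cIt e' K x 1) (fun i s => s * cIt e' K x (i+2)) j

theorem cIt_zero (e' : X) (K : ℕ) (x : X) : cIt e' K x 0 = e' := rfl
theorem cIt_succ (e' : X) (K : ℕ) (x : X) (j : ℕ) :
    cIt e' K x (j+1) = x * cIt e' K x j * spow x (K-1) := rfl
theorem sAf_zero (e' : X) (K : ℕ) (x : X) : sAf e' K x 0 = e' := rfl
theorem sAf_succ (e' : X) (K : ℕ) (x : X) (j : ℕ) :
    sAf e' K x (j+1) = sAf e' K x j * cIt e' K x (j+1) := rfl
theorem sAsh_zero (e' : X) (K : ℕ) (x : X) : sAsh e' K x 0 = cIt e' K x 1 := rfl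
theorem sAsh_succ (e' : X) (K : ℕ) (x : X) (j : ℕ) :
    sAsh e' K x (j+1) = sAsh e' K x j * cIt e' K x (j+2) := rfl

theorem hxux_eq {K : ℕ} (hK : 1 ≤ K) (x : X) : x * spow x (K-1) = spow x K := by
  have harith : 0 + (K-1) + 1 = K := by omega
  have h2 := spow_add x 0 (K-1)
  rw [harith] at h2
  rw [h2, spow_zero]

theorem huxx_eq {K : ℕ} (hK : 1 ≤ K) (x : X) : spow x (K-1) * x = spow x K := by
  have harith : (K-1) + 1 = K := by omega
  rw [← spow_succ, harith]

section ConjFacts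

variable (h5 : ECommutative X) {K : ℕ} (hK : 1 ≤ K) {e' x g : X}
  (he'idem : e' ∈ idemSet X) (hgidem : g ∈ idemSet X)
  (hxg : x ∈ maxSubgroup X g) (he'g : e' * g = e')

include h5 hK he'idem hgidem hxg he'g in
theorem cIt_facts (hfg : spow x K = g) : ∀ j, cIt e' K x j ∈ idemSet X ∧
    cIt e' K x j * g = cIt e' K x j ∧ g * cIt e' K x j = cIt e' K x j := by
  have hge' : g * e' = e' := by rw [← h5 _ he'idem _ hgidem, he'g]
  have hxg1 : x * g = x := hxg.1
  have hgx1 : g * x = x := hxg.2.1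
  have hux : spow x (K-1) ∈ maxSubgroup X g := spow_mem_maxSubgroup hxg (K-1)
  have huxg : spow x (K-1) * g = spow x (K-1) := hux.1
  have hmid : ∀ w : X, spow x (K-1) * (x * w) = g * w := by
    intro w
    rw [← mul_assoc, huxx_eq hK x, hfg]
  intro j
  induction j with
  | zero => exact ⟨he'idem, he'g, hge'⟩
  | succ j ih =>
      obtain ⟨hidem, hcg, hgc⟩ := ih
      set c := cIt e' K x j with hc
      refine ⟨?_, ?_, ?_⟩
      · show (x * c * spow x (K-1)) * (x * c * spow x (K-1)) = x * c * spow x (K-1)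
        calc (x * c * spow x (K-1)) * (x * c * spow x (K-1))
            = x * (c * (spow x (K-1) * (x * (c * spow x (K-1))))) := by
              simp only [mul_assoc]
          _ = x * (c * (g * (c * spow x (K-1)))) := by rw [hmid]
          _ = x * (c * (c * spow x (K-1))) := by rw [← mul_assoc g c, hgc]
          _ = x * ((c * c) * spow x (K-1)) := by rw [← mul_assoc c c]
          _ = x * c * spow x (K-1) := by rw [hidem, mul_assoc]
      · show (x * c * spow x (K-1)) * g = x * c * spow x (K-1)
        calc (x * c * spow x (K-1)) * g = x * c * (spow x (K-1) * g) := mul_assoc _ _ _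
          _ = x * c * spow x (K-1) := by rw [huxg]
      · show g * (x * c * spow x (K-1)) = x * c * spow x (K-1)
        rw [← mul_assoc, ← mul_assoc, hgx1]

include h5 hK he'idem hgidem hxg he'g in
theorem sAf_facts (hfg : spow x K = g) : ∀ j, sAf e' K x j ∈ idemSet X ∧
    sAf e' K x j * g = sAf e' K x j ∧ g * sAf e' K x j = sAf e' K x j ∧
    sAf e' K x j * e' = sAf e' K x j ∧ e' * sAf e' K x j = sAf e' K x j := by
  have hge' : g * e' = e' := by rw [← h5 _ he'idem _ hgidem, he'g]
  have hcf := cIt_facts h5 hK he'idem hgidem hxg he'g hfg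
  intro j
  induction j with
  | zero =>
      exact ⟨he'idem, he'g, hge', he'idem, he'idem⟩
  | succ j ih =>
      obtain ⟨hidem, hsg, hgs, hse, hes⟩ := ih
      obtain ⟨hcidem, hcg, hgc⟩ := hcf (j+1)
      set s := sAf e' K x j with hs
      set c := cIt e' K x (j+1) with hcj
      have hcomm_ce : c * e' = e' * c := h5 _ hcidem _ he'idem
      refine ⟨idem_mul_idem_comm_mem h5 hidem hcidem, ?_, ?_, ?_, ?_⟩
      · show (s * c) * g = s * c
        rw [mul_assoc, hcg]
      · show g * (s * c) = s * c
        rw [← mul_assoc, hgs]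
      · show (s * c) * e' = s * c
        rw [mul_assoc, hcomm_ce, ← mul_assoc, hse]
      · show e' * (s * c) = s * c
        rw [← mul_assoc, hes]

theorem cIt_repr : ∀ j, cIt e' K x (j+1) = spow x j * e' * spow (spow x (K-1)) j := by
  intro j
  induction j with
  | zero => rfl
  | succ j ih =>
      rw [cIt_succ, ih]
      have h1 : x * spow x j = spow x (j+1) := by
        have harith : 0 + j + 1 = j + 1 := by omega
        have := spow_add x 0 j
        rw [harith] at this
        rw [this, spow_zero]
      calc x * (spow x j * e' * spow (spow x (K-1)) j) * spow x (K-1)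
          = (x * spow x j) * e' * (spow (spow x (K-1)) j * spow x (K-1)) := by
            simp only [mul_assoc]
        _ = spow x (j+1) * e' * spow (spow x (K-1)) (j+1) := by rw [h1, ← spow_succ]

include h5 hK he'idem hgidem hxg he'g in
theorem cIt_top (hfg : spow x K = g) : cIt e' K x (K+1) = e' := by
  have hge' : g * e' = e' := by rw [← h5 _ he'idem _ hgidem, he'g]
  rw [cIt_repr, hfg]
  have h2 : spow (spow x (K-1)) K = g := by
    rw [spow_spow]
    have harith : (K-1)*K + (K-1) + K = K*(K-1) + K + (K-1) := by ring
    rw [harith, ← spow_spow, hfg, spow_idem hgidem]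
  rw [h2, hge', he'g]

include h5 hK he'idem hgidem hxg he'g in
theorem sAsh_idem (hfg : spow x K = g) : ∀ j, sAsh e' K x j ∈ idemSet X := by
  have hcf := cIt_facts h5 hK he'idem hgidem hxg he'g hfg
  intro j
  induction j with
  | zero => exact (hcf 1).1
  | succ j ih => exact idem_mul_idem_comm_mem h5 ih (hcf (j+2)).1

include h5 hK he'idem hgidem hxg he'g in
theorem sAf_sAsh (hfg : spow x K = g) : ∀ j, sAf e' K x (j+1) = e' * sAsh e' K x j := by
  intro j
  induction j with
  | zero => rw [sAf_succ, sAf_zero, sAsh_zero]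
  | succ j ih =>
      rw [sAf_succ, ih, sAsh_succ, mul_assoc]

include h5 hK he'idem hgidem hxg he'g in
theorem shift_eq (hfg : spow x K = g) :
    ∀ j, x * sAf e' K x j * spow x (K-1) = sAsh e' K x j := by
  have hcf := cIt_facts h5 hK he'idem hgidem hxg he'g hfg
  intro j
  induction j with
  | zero => rw [sAf_zero, sAsh_zero, cIt_succ, cIt_zero]
  | succ j ih =>
      rw [sAf_succ, sAsh_succ, ← ih]
      -- x * (sAf j * c_{j+1}) * ux = (x * sAf j * ux) * (x * c_{j+1} * ux)
      have hg_c : g * cIt e' K x (j+1) = cIt e' K x (j+1) := (hcf (j+1)).2.2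
      have hmid : spow x (K-1) * x = g := by rw [huxx_eq hK x, hfg]
      rw [cIt_succ]
      calc x * (sAf e' K x j * cIt e' K x (j+1)) * spow x (K-1)
          = x * (sAf e' K x j * ((spow x (K-1) * x) * cIt e' K x (j+1))) * spow x (K-1) := by
            rw [hmid, hg_c]
        _ = (x * sAf e' K x j * spow x (K-1)) *
            (x * cIt e' K x (j+1) * spow x (K-1)) := by simp only [mul_assoc]

include h5 hK he'idem hgidem hxg he'g in
theorem sX_fix (hfg : spow x K = g) :
    x * sAf e' K x K * spow x (K-1) = sAf e' K x K := by
  have hsh := shift_eq h5 hK he'idem hgidem hxg he'g hfg K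
  have hK1 : K - 1 + 1 = K := by omega
  have htop := cIt_top h5 hK he'idem hgidem hxg he'g hfg
  have h2 : sAsh e' K x K = sAsh e' K x (K-1) * e' := by
    have := sAsh_succ e' K x (K-1)
    rw [hK1] at this
    rw [this]
    congr 1
    rw [show K - 1 + 2 = K + 1 by omega, htop]
  have h3 : sAf e' K x K = e' * sAsh e' K x (K-1) := by
    have := sAf_sAsh h5 hK he'idem hgidem hxg he'g hfg (K-1)
    rw [hK1] at this
    exact this
  have hcomm : sAsh e' K x (K-1) * e' = e' * sAsh e' K x (K-1) :=
    h5 _ (sAsh_idem h5 hK he'idem hgidem hxg he'g hfg (K-1)) _ he'idem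
  rw [hsh, h2, hcomm, ← h3]

include h5 hK he'idem hgidem hxg he'g in
theorem sX_comm (hfg : spow x K = g) :
    x * sAf e' K x K = sAf e' K x K * x := by
  have hfix := sX_fix h5 hK he'idem hgidem hxg he'g hfg
  have hmid : spow x (K-1) * x = g := by rw [huxx_eq hK x, hfg]
  have hsg : sAf e' K x K * g = sAf e' K x K :=
    (sAf_facts h5 hK he'idem hgidem hxg he'g hfg K).2.1
  calc x * sAf e' K x K = x * (sAf e' K x K * g) := by rw [hsg]
    _ = x * (sAf e' K x K * (spow x (K-1) * x)) := by rw [hmid]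
    _ = (x * sAf e' K x K * spow x (K-1)) * x := by simp only [mul_assoc]
    _ = sAf e' K x K * x := by rw [hfix]

include h5 hK he'idem hgidem hxg he'g in
theorem sX_group (hfg : spow x K = g) :
    x * sAf e' K x K ∈ maxSubgroup X (sAf e' K x K) := by
  set s := sAf e' K x K with hs
  have hfacts := sAf_facts h5 hK he'idem hgidem hxg he'g hfg K
  have hss : s * s = s := hfacts.1
  have hgs : g * s = s := hfacts.2.2.1
  have hcx : x * s = s * x := sX_comm h5 hK he'idem hgidem hxg he'g hfg
  have hcux : spow x (K-1) * s = s * spow x (K-1) := comm_spow hcx (K-1)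
  have hxux : x * spow x (K-1) = g := by rw [hxux_eq hK x, hfg]
  have huxx : spow x (K-1) * x = g := by rw [huxx_eq hK x, hfg]
  refine ⟨?_, ?_, spow x (K-1) * s, ?_, ?_, ?_, ?_⟩
  · show (x * s) * s = x * s
    rw [mul_assoc, hss]
  · show s * (x * s) = x * s
    rw [← mul_assoc, ← hcx, mul_assoc, hss]
  · show (spow x (K-1) * s) * s = spow x (K-1) * s
    rw [mul_assoc, hss]
  · show s * (spow x (K-1) * s) = spow x (K-1) * s
    rw [← mul_assoc, ← hcux, mul_assoc, hss]
  · show (x * s) * (spow x (K-1) * s) = s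
    calc (x * s) * (spow x (K-1) * s) = x * ((s * spow x (K-1)) * s) := by
          simp only [mul_assoc]
      _ = x * ((spow x (K-1) * s) * s) := by rw [← hcux]
      _ = (x * spow x (K-1)) * (s * s) := by simp only [mul_assoc]
      _ = s := by rw [hss, hxux, hgs]
  · show (spow x (K-1) * s) * (x * s) = s
    calc (spow x (K-1) * s) * (x * s) = spow x (K-1) * ((s * x) * s) := by
          simp only [mul_assoc]
      _ = spow x (K-1) * ((x * s) * s) := by rw [← hcx]
      _ = (spow x (K-1) * x) * (s * s) := by simp only [mul_assoc]
      _ = s := by rw [hss, huxx, hgs]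

end ConjFacts

end Conj

end St16

namespace St16

open Filter Function Set Topology

section Sigma

variable {X Y : Type u} [Semigroup X] [Semigroup Y] [TopologicalSpace Y]
  [ContinuousMul Y] [T2Space Y]

theorem finite_limit {φ : X → Y} {W : Ultrafilter X} {y : Y}
    (hW : Tendsto φ (↑W) (𝓝 y)) {T : Set X} (hT : T ∈ W) (hfin : T.Finite) :
    y ∈ φ '' T := by
  have hcl : y ∈ closure (φ '' T) := by
    rw [mem_closure_iff_nhds]
    intro t ht
    obtain ⟨x, hx⟩ := W.nonempty_of_mem (Filter.inter_mem (Filter.mem_map.mp (hW ht)) hT)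
    exact ⟨φ x, hx.1, ⟨x, hx.2, rfl⟩⟩
  exact ((hfin.image φ).isClosed.closure_subset) hcl

theorem map_cIt (h : X →ₙ* Y) (e' : X) (K : ℕ) (x : X) :
    ∀ j, h (cIt e' K x j) = cIt (h e') K (h x) j := by
  intro j
  induction j with
  | zero => rfl
  | succ j ih => rw [cIt_succ, cIt_succ, map_mul, map_mul, ih, map_spow]

theorem map_sAf (h : X →ₙ* Y) (e' : X) (K : ℕ) (x : X) :
    ∀ j, h (sAf e' K x j) = sAf (h e') K (h x) j := by
  intro j
  induction j with
  | zero => rw [sAf_zero, sAf_zero]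
  | succ j ih => rw [sAf_succ, sAf_succ, map_mul, ih, map_cIt]

theorem continuous_cIt (q : Y) (K : ℕ) (j : ℕ) :
    Continuous (fun t : Y => cIt q K t j) := by
  induction j with
  | zero => exact continuous_const
  | succ j ih =>
      show Continuous (fun t : Y => t * cIt q K t j * spow t (K-1))
      exact (continuous_id.mul ih).mul (continuous_spow (K-1))

theorem continuous_sAf (q : Y) (K : ℕ) (j : ℕ) :
    Continuous (fun t : Y => sAf q K t j) := by
  induction j with
  | zero => exact continuous_const
  | succ j ih =>
      show Continuous (fun t : Y => sAf q K t j * cIt q K t (j+1))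
      exact ih.mul (continuous_cIt q K (j+1))

theorem cIt_at_y {q y : Y} {K : ℕ} (hK : 1 ≤ K) (hyq : y * q = y)
    (hqdef : spow y K = q) : ∀ j, cIt q K y j = q := by
  intro j
  induction j with
  | zero => rfl
  | succ j ih =>
      rw [cIt_succ, ih]
      calc y * q * spow y (K-1) = y * spow y (K-1) := by rw [hyq]
        _ = spow y K := hxux_eq hK y
        _ = q := hqdef

theorem sAf_at_y {q y : Y} {K : ℕ} (hK : 1 ≤ K) (hyq : y * q = y)
    (hqdef : spow y K = q) (hqq : q * q = q) : ∀ j, sAf q K y j = q := by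
  intro j
  induction j with
  | zero => rw [sAf_zero]
  | succ j ih => rw [sAf_succ, ih, cIt_at_y hK hyq hqdef, hqq]

/-- The σ-step: given a viable idempotent `e'` below the `W`-generic maximal
subgroups, push `W` forward to a new ultrafilter still converging to `y` but whose
generic idempotents lie below `e'`. -/
theorem sigma_step (h5 : ECommutative X) (h : X →ₙ* Y) (K : ℕ) (hK : 1 ≤ K)
    (hfidem : ∀ x : X, spow x K ∈ idemSet X)
    (W : Ultrafilter X) (y q : Y)
    (hW : Tendsto h (↑W) (𝓝 y))
    (hcliff : {x : X | x ∈ cliffordPart X} ∈ W)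
    (e' : X) (he'idem : e' ∈ idemSet X) (hhe' : h e' = q)
    (hev : {x : X | e' * spow x K = e'} ∈ W)
    (hyq : y * q = y) (hqdef : spow y K = q) (hqq : q * q = q) :
    ∃ W' : Ultrafilter X, Tendsto h (↑W') (𝓝 y) ∧
      ({x : X | x ∈ cliffordPart X} ∈ W') ∧
      ({x : X | spow x K * e' = spow x K} ∈ W') := by
  classical
  set σ : X → X := fun x => x * sAf e' K x K with hσ
  refine ⟨W.map σ, ?_, ?_, ?_⟩
  · -- convergence
    rw [Ultrafilter.coe_map]
    rw [Filter.tendsto_map'_iff]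
    have hcont : Continuous (fun t : Y => t * sAf q K t K) :=
      continuous_id.mul (continuous_sAf q K K)
    have hΨy : y * sAf q K y K = y := by
      rw [sAf_at_y hK hyq hqdef hqq, hyq]
    have ht : Tendsto (fun x : X => h x * sAf q K (h x) K) (↑W) (𝓝 y) := by
      have := (hcont.tendsto y).comp hW
      rw [hΨy] at this
      exact this
    refine Filter.Tendsto.congr ?_ ht
    intro x
    show h x * sAf q K (h x) K = (h ∘ σ) x
    simp only [Function.comp, hσ, map_mul, map_sAf, hhe']
  · -- new generic elements are in the Clifford part
    rw [Ultrafilter.mem_map]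
    refine Filter.mem_of_superset (Filter.inter_mem hcliff hev) ?_
    rintro x ⟨hxc, hxe⟩
    obtain ⟨g, hgidem, hxg⟩ := mem_cliffordPart_iff.mp hxc
    have hfg : spow x K = g := spow_eq_idem_of_mem hgidem hxg (hfidem x)
    have he'g : e' * g = e' := by rw [← hfg]; exact hxe
    show σ x ∈ cliffordPart X
    exact mem_cliffordPart_iff.mpr ⟨sAf e' K x K,
      (sAf_facts h5 hK he'idem hgidem hxg he'g hfg K).1,
      sX_group h5 hK he'idem hgidem hxg he'g hfg⟩
  · -- ceiling : the new generic idempotents lie below e'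
    rw [Ultrafilter.mem_map]
    refine Filter.mem_of_superset (Filter.inter_mem hcliff hev) ?_
    rintro x ⟨hxc, hxe⟩
    obtain ⟨g, hgidem, hxg⟩ := mem_cliffordPart_iff.mp hxc
    have hfg : spow x K = g := spow_eq_idem_of_mem hgidem hxg (hfidem x)
    have he'g : e' * g = e' := by rw [← hfg]; exact hxe
    have hsidem := (sAf_facts h5 hK he'idem hgidem hxg he'g hfg K).1
    have hse' := (sAf_facts h5 hK he'idem hgidem hxg he'g hfg K).2.2.2.1
    have hKpow : spow (σ x) K = sAf e' K x K :=
      spow_eq_idem_of_mem hsidem (sX_group h5 hK he'idem hgidem hxg he'g hfg) (hfidem _)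
    show spow (σ x) K * e' = spow (σ x) K
    rw [hKpow]
    exact hse'

end Sigma

end St16

open Filter Function Topology St16

theorem statement16 (X : Type u) [Semigroup X] (h1 : ChainFinite X) (h2 : GroupFinite X)
    (h3 : BoundedSemigroup X) (h4 : CliffordPlusFinite X) (h5 : ECommutative X) :
    AbsolutelyT2SClosed X := by
  classical
  obtain ⟨n, hn⟩ := h3
  set K := 2*n+1 with hKdef
  have hK : 1 ≤ K := by omega
  have hfidem : ∀ x : X, spow x K ∈ idemSet X := by
    intro x
    have harith : n + n + 1 = K := by omega
    have h2' : spow x K = spow x n := by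
      rw [← harith, spow_add]; exact hn x
    rw [h2']; exact hn x
  intro Y _ _ _ _ h
  refine isClosed_of_closure_subset ?_
  intro y hy
  -- an ultrafilter on X whose image converges to y
  have hproper : Filter.NeBot (Filter.comap h (𝓝 y)) := Filter.comap_neBot (by
    intro t ht
    obtain ⟨z, hz1, hz2⟩ := mem_closure_iff_nhds.mp hy t ht
    obtain ⟨x, rfl⟩ := hz2
    exact ⟨x, hz1⟩)
  set U := Ultrafilter.of (Filter.comap h (𝓝 y)) with hU
  have hUy : Tendsto h (↑U) (𝓝 y) := by
    calc Filter.map h ↑U ≤ Filter.map h (Filter.comap h (𝓝 y)) :=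
          Filter.map_mono (Ultrafilter.of_le _)
      _ ≤ 𝓝 y := Filter.map_comap_le
  by_cases hcliffU : {x : X | x ∈ cliffordPart X} ∈ U
  swap
  · -- the (finite) non-Clifford part is U-large : y is in the image of a finite set
    have hcomp : {x : X | x ∈ cliffordPart X}ᶜ ∈ U :=
      Ultrafilter.compl_mem_iff_notMem.mpr hcliffU
    have hfin : ({x : X | x ∈ cliffordPart X}ᶜ : Set X).Finite := by
      have heq : {x : X | x ∈ cliffordPart X}ᶜ = Set.univ \ cliffordPart X := by
        ext x; simp
      rw [heq]; exact h4
    obtain ⟨x, -, rfl⟩ := finite_limit hUy hcomp hfin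
    exact ⟨x, rfl⟩
  -- relations satisfied by y
  have mk_hq : ∀ W : Ultrafilter X, Tendsto h (↑W) (𝓝 y) →
      Tendsto (fun x => h (spow x K)) (↑W) (𝓝 (spow y K)) := by
    intro W hW
    have ht := ((continuous_spow K).tendsto y).comp hW
    refine Filter.Tendsto.congr ?_ ht
    intro x
    exact (map_spow h x K).symm
  have hyNsucc : spow y K * y = y := by
    have t1 : Tendsto (fun x => h (spow x K) * h x) (↑U) (𝓝 (spow y K * y)) :=
      (mk_hq U hUy).mul hUy
    have t2 : Tendsto (fun x => h (spow x K) * h x) (↑U) (𝓝 y) := by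
      refine Filter.Tendsto.congr' ?_ hUy
      filter_upwards [hcliffU] with x hx
      obtain ⟨g, hgidem, hxg⟩ := mem_cliffordPart_iff.mp hx
      have hK1 : spow x (K+1) = x := spow_K_succ_eq_self hgidem hxg (hfidem x)
      rw [← map_mul, ← spow_succ, hK1]
    exact tendsto_nhds_unique t1 t2
  set q := spow y K with hqdef0
  have hy1 : spow y (K+1) = y := by rw [spow_succ]; exact hyNsucc
  have hyq : y * q = y := by
    have h0 : (0:ℕ)+K+1 = K+1 := by omega
    have hadd := spow_add y 0 K
    rw [h0, spow_zero] at hadd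
    calc y * q = spow y (K+1) := hadd.symm
      _ = y := hy1
  have hqq : q * q = q := by
    have harith : K + K + 1 = (K-1) + (K+1) + 1 := by omega
    have hK11 : K - 1 + 1 = K := by omega
    calc q * q = spow y (K + K + 1) := (spow_add y K K).symm
      _ = spow y (K-1) * spow y (K+1) := by rw [harith, spow_add]
      _ = spow y ((K-1) + 1) := by rw [hy1, ← spow_succ]
      _ = q := by rw [hK11]
  -- the main well-founded induction on the ceiling idempotent
  have main : ∀ ebar : X, ebar ∈ idemSet X → ∀ W : Ultrafilter X,
      Tendsto h (↑W) (𝓝 y) → {x : X | x ∈ cliffordPart X} ∈ W →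
      {x : X | spow x K * ebar = spow x K} ∈ W → y ∈ Set.range h := by
    intro ebar₀
    refine (wf_rdec h1 h5).induction
      (C := fun ebar => ebar ∈ idemSet X → ∀ W : Ultrafilter X,
        Tendsto h (↑W) (𝓝 y) → {x : X | x ∈ cliffordPart X} ∈ W →
        {x : X | spow x K * ebar = spow x K} ∈ W → y ∈ Set.range h) ebar₀ ?_
    intro ebar IH hebaridem W hWy hWcliff hWceil
    obtain ⟨e', he'idem, hhe', hev, hQ⟩ :=
      core h1 h5 h K hfidem W q (mk_hq W hWy) hqq
    have he'ebar : e' * ebar = e' := hQ ebar hWceil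
    by_cases hcase : e' = ebar
    · -- termination : the maximal subgroup H_ebar is finite
      subst hcase
      have hsub : ({x : X | x ∈ cliffordPart X} ∩ {x | spow x K * e' = spow x K} ∩
          {x | e' * spow x K = e'}) ⊆ maxSubgroup X e' := by
        rintro x ⟨⟨hxc, hxceil⟩, hxe⟩
        obtain ⟨g, hgidem, hxg⟩ := mem_cliffordPart_iff.mp hxc
        have hfg : spow x K = g := spow_eq_idem_of_mem hgidem hxg (hfidem x)
        have h1g : g * e' = g := by rw [← hfg]; exact hxceil
        have h2g : e' * g = e' := by rw [← hfg]; exact hxe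
        have hge : g = e' := by rw [← h1g, h5 _ hgidem _ he'idem, h2g]
        rw [← hge]; exact hxg
      have hfin : (maxSubgroup X e').Finite := h2 _ (maxSubgroup_isSubgroupSet he'idem)
      have hTW : ({x : X | x ∈ cliffordPart X} ∩ {x | spow x K * e' = spow x K} ∩
          {x | e' * spow x K = e'}) ∈ W :=
        Filter.inter_mem (Filter.inter_mem hWcliff hWceil) hev
      obtain ⟨x, -, rfl⟩ := finite_limit hWy hTW (hfin.subset hsub)
      exact ⟨x, rfl⟩
    · -- recursion : strictly smaller ceiling
      obtain ⟨W', hW'y, hW'cliff, hW'ceil⟩ := sigma_step h5 h K hK hfidem W y q hWy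
        hWcliff e' he'idem hhe' hev hyq hqdef0.symm hqq
      exact IH e' ⟨he'idem, hebaridem, he'ebar, hcase⟩ he'idem W' hW'y hW'cliff hW'ceil
  -- initialization
  obtain ⟨e0, he0idem, hhe0, hev0, hQ0⟩ := core h1 h5 h K hfidem U q (mk_hq U hUy) hqq
  obtain ⟨W1, hW1y, hW1cliff, hW1ceil⟩ := sigma_step h5 h K hK hfidem U y q hUy
    hcliffU e0 he0idem hhe0 hev0 hyq hqdef0.symm hqq
  exact main e0 he0idem W1 hW1y hW1cliff hW1ceil
end
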